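/- For every s ∈ S and every v ∈ V, one has d̃_{G,w,S}(s,v) ≥ d_{G,w}(s,v). -/
import Mathlib


open scoped ENNReal

/-- The length of a walk with respect to real edge weights (summed as `ℝ≥0∞`
via `ENNReal.ofReal`). -/
noncomputable def wlen {V : Type*} (G : SimpleGraph V) (w : V → V → ℝ) {u v : V}
    (p : G.Walk u v) : ℝ≥0∞ :=
  (p.darts.map fun d => ENNReal.ofReal (w d.toProd.1 d.toProd.2)).sum

/-- The weighted distance: the infimum of walk lengths (`∞` if `u` and `v` are not
connected, `0` if `u = v`). -/
noncomputable def wdist {V : Type*} (G : SimpleGraph V) (w : V → V → ℝ) (u v : V) : ℝ≥0∞ :=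
  ⨅ p : G.Walk u v, wlen G w p

/-- The rounded weights `μ^{(L)}_i(e) = ⌈2L·μ(e)/(ε·2^i)⌉` (natural numbers, viewed as
real weights). -/
noncomputable def wround {V : Type*} (w : V → V → ℝ) (ε L : ℝ) (i : ℕ) : V → V → ℝ :=
  fun u v => (⌈2 * L * w u v / (ε * 2 ^ i)⌉₊ : ℝ)

/-- The approximate `L`-hop distance `d̃^L_{H,μ}(u,v)`: the minimum over integers `i ≥ 0`
with `d_{H,μ^{(L)}_i}(u,v) ≤ (1+2/ε)·L` of `d_{H,μ^{(L)}_i}(u,v)·ε·2^i/(2L)`, and `∞` if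
no such `i` exists. -/
noncomputable def dtilde {V : Type*} (G : SimpleGraph V) (w : V → V → ℝ) (ε L : ℝ)
    (u v : V) : ℝ≥0∞ :=
  ⨅ (i : ℕ) (_ : wdist G (wround w ε L i) u v ≤ ENNReal.ofReal ((1 + 2 / ε) * L)),
    wdist G (wround w ε L i) u v * ENNReal.ofReal (ε * 2 ^ i / (2 * L))

/-- The weights `w'_S({u,v}) = d̃^ℓ_{G,w}(u,v)` of the complete graph `(G'_S, w'_S)` on `S`
(as real numbers; the relevant values are assumed finite). -/
noncomputable def skelW {V : Type*} (G : SimpleGraph V) (w : V → V → ℝ) (ε : ℝ) (ℓ : ℕ)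
    (S : Finset V) : {x // x ∈ S} → {x // x ∈ S} → ℝ :=
  fun u v => (dtilde G w ε (ℓ : ℝ) (u : V) (v : V)).toReal

/-- The weights `w''_S` of the `k`-shortcut graph `(G''_S, w''_S)` on `S`:
`w''_S({u,v}) = d_{G'_S,w'_S}(u,v)` if `u ∈ N^k_S(v)` or `v ∈ N^k_S(u)`, and
`w''_S({u,v}) = w'_S({u,v})` otherwise. -/
noncomputable def skelW2 {V : Type*} [DecidableEq V] (G : SimpleGraph V) (w : V → V → ℝ)
    (ε : ℝ) (ℓ : ℕ) (S : Finset V) (N : {x // x ∈ S} → Finset {x // x ∈ S}) :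
    {x // x ∈ S} → {x // x ∈ S} → ℝ :=
  fun u v => if u ∈ N v ∨ v ∈ N u
    then (wdist (⊤ : SimpleGraph {x // x ∈ S}) (skelW G w ε ℓ S) u v).toReal
    else skelW G w ε ℓ S u v

/-- The approximate distance
`d̃_{G,w,S}(s,v) = min_{u ∈ S} ( d̃^{4|S|/k}_{G''_S,w''_S}(s,u) + d̃^ℓ_{G,w}(u,v) )`. -/
noncomputable def approxDist {V : Type*} [DecidableEq V] (G : SimpleGraph V)
    (w : V → V → ℝ) (ε : ℝ) (ℓ : ℕ) (S : Finset V) (k : ℕ)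
    (N : {x // x ∈ S} → Finset {x // x ∈ S}) (s : {x // x ∈ S}) (v : V) : ℝ≥0∞ :=
  ⨅ u : {x // x ∈ S},
    dtilde (⊤ : SimpleGraph {x // x ∈ S}) (skelW2 G w ε ℓ S N) ε
        (4 * (S.card : ℝ) / (k : ℝ)) s u +
      dtilde G w ε (ℓ : ℝ) (u : V) v


section Aux

variable {V : Type*} {V' : Type*}

@[simp] lemma wlen_nil (G : SimpleGraph V) (w : V → V → ℝ) (u : V) :
    wlen G w (SimpleGraph.Walk.nil : G.Walk u u) = 0 := by
  simp [wlen]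

@[simp] lemma wlen_cons (G : SimpleGraph V) (w : V → V → ℝ) {u x y : V}
    (h : G.Adj u x) (p : G.Walk x y) :
    wlen G w (SimpleGraph.Walk.cons h p) = ENNReal.ofReal (w u x) + wlen G w p := by
  simp [wlen]

lemma wdist_le_wlen (G : SimpleGraph V) (w : V → V → ℝ) {u v : V} (p : G.Walk u v) :
    wdist G w u v ≤ wlen G w p := iInf_le _ p

lemma wdist_triangle (G : SimpleGraph V) (w : V → V → ℝ) (u x y : V) :
    wdist G w u y ≤ wdist G w u x + wdist G w x y := by
  have key : ∀ (p : G.Walk u x) (q : G.Walk x y),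
      wdist G w u y ≤ wlen G w p + wlen G w q := by
    intro p q
    have := wdist_le_wlen G w (p.append q)
    refine this.trans_eq ?_
    simp [wlen, SimpleGraph.Walk.darts_append]
  conv_rhs => rw [wdist, wdist, ENNReal.iInf_add]
  refine le_iInf fun p => ?_
  rw [ENNReal.add_iInf]
  exact le_iInf fun q => key p q

/-- Lifting: if each edge of `H` (via `f`) dominates the `G`-distance, then the
`H`-distance dominates the `G`-distance. -/
lemma wdist_lift (G : SimpleGraph V) (w : V → V → ℝ) (H : SimpleGraph V')
    (μ : V' → V' → ℝ) (f : V' → V)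
    (h : ∀ a b, H.Adj a b → wdist G w (f a) (f b) ≤ ENNReal.ofReal (μ a b))
    (a b : V') : wdist G w (f a) (f b) ≤ wdist H μ a b := by
  refine le_iInf fun p => ?_
  induction p with
  | nil =>
      rw [wlen_nil]
      exact (wdist_le_wlen G w SimpleGraph.Walk.nil).trans_eq (wlen_nil G w _)
  | @cons a c b hadj p ih =>
      rw [wlen_cons]
      calc wdist G w (f a) (f b)
          ≤ wdist G w (f a) (f c) + wdist G w (f c) (f b) := wdist_triangle G w _ _ _
        _ ≤ ENNReal.ofReal (μ a c) + wlen H μ p := add_le_add (h a c hadj) ih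

lemma ofReal_le_round_mul {w ε L : ℝ} (hε : 0 < ε) (hL : 0 < L) (i : ℕ) :
    ENNReal.ofReal w ≤ ENNReal.ofReal ((⌈2 * L * w / (ε * 2 ^ i)⌉₊ : ℝ))
      * ENNReal.ofReal (ε * 2 ^ i / (2 * L)) := by
  have hc : (0:ℝ) < ε * 2 ^ i / (2 * L) := by positivity
  rw [← ENNReal.ofReal_mul (by positivity)]
  refine ENNReal.ofReal_le_ofReal ?_
  rcases le_or_gt w 0 with hw | hw
  · exact hw.trans (by positivity)
  · have hx : 2 * L * w / (ε * 2 ^ i) ≤ (⌈2 * L * w / (ε * 2 ^ i)⌉₊ : ℝ) :=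
      Nat.le_ceil _
    have h2 : (2 * L * w / (ε * 2 ^ i)) * (ε * 2 ^ i / (2 * L)) = w := by
      field_simp
    nlinarith [mul_le_mul_of_nonneg_right hx hc.le]

lemma wlen_le_round (G : SimpleGraph V) (w : V → V → ℝ) {ε L : ℝ}
    (hε : 0 < ε) (hL : 0 < L) (i : ℕ) {u v : V} (p : G.Walk u v) :
    wlen G w p ≤ wlen G (wround w ε L i) p * ENNReal.ofReal (ε * 2 ^ i / (2 * L)) := by
  induction p with
  | nil => simp
  | cons h p ih =>
      rw [wlen_cons, wlen_cons, add_mul]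
      exact add_le_add (ofReal_le_round_mul hε hL i) ih

lemma wdist_le_dtilde (G : SimpleGraph V) (w : V → V → ℝ) {ε L : ℝ}
    (hε : 0 < ε) (hL : 0 < L) (u v : V) :
    wdist G w u v ≤ dtilde G w ε L u v := by
  refine le_iInf fun i => le_iInf fun _ => ?_
  have hc : (0:ℝ) < ε * 2 ^ i / (2 * L) := by positivity
  have hc0 : ENNReal.ofReal (ε * 2 ^ i / (2 * L)) ≠ 0 :=
    (ENNReal.ofReal_pos.mpr hc).ne' 
  have hct : ENNReal.ofReal (ε * 2 ^ i / (2 * L)) ≠ ⊤ := ENNReal.ofReal_ne_top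
  rw [← ENNReal.div_le_iff_le_mul (Or.inl hc0) (Or.inl hct)]
  refine le_iInf fun p => ?_
  rw [ENNReal.div_le_iff_le_mul (Or.inl hc0) (Or.inl hct)]
  exact (wdist_le_wlen G w p).trans (wlen_le_round G w hε hL i p)

end Aux

/-- For every `s ∈ S` and every `v ∈ V`,
`d̃_{G,w,S}(s,v) ≥ d_{G,w}(s,v)`. -/
theorem stmt11 {V : Type*} [Fintype V] [DecidableEq V]
    (G : SimpleGraph V) (hconn : G.Connected)
    (w : V → V → ℝ) (hsymm : ∀ u v, w u v = w v u) (hge1 : ∀ u v, G.Adj u v → 1 ≤ w u v)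
    (ε : ℝ) (hε : 0 < ε) (ℓ : ℕ) (hℓ : 1 ≤ ℓ)
    (S : Finset V) (k : ℕ) (hk1 : 1 ≤ k) (hk2 : k ≤ S.card - 1)
    (hfin : ∀ u v : {x // x ∈ S}, dtilde G w ε (ℓ : ℝ) (u : V) (v : V) ≠ ⊤)
    (N : {x // x ∈ S} → Finset {x // x ∈ S})
    (hNself : ∀ v, v ∉ N v) (hNcard : ∀ v, (N v).card = k)
    (hNnear : ∀ v, ∀ u ∈ N v, ∀ z, z ∉ N v → z ≠ v →
      wdist (⊤ : SimpleGraph {x // x ∈ S}) (skelW G w ε ℓ S) v u ≤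
        wdist (⊤ : SimpleGraph {x // x ∈ S}) (skelW G w ε ℓ S) v z)
    (s : {x // x ∈ S}) (v : V) :
    wdist G w (s : V) v ≤ approxDist G w ε ℓ S k N s v := by
  classical
  have hScard : 2 ≤ S.card := by
    have : 0 < S.card - 1 := lt_of_lt_of_le hk1 hk2
    omega
  have hL4 : (0:ℝ) < 4 * (S.card : ℝ) / (k : ℝ) := by
    have h1 : (0:ℝ) < (S.card : ℝ) := by exact_mod_cast Nat.lt_of_lt_of_le Nat.zero_lt_two hScard
    have h2 : (0:ℝ) < (k : ℝ) := by exact_mod_cast hk1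
    positivity
  have hLℓ : (0:ℝ) < (ℓ : ℝ) := by exact_mod_cast hℓ
  -- per-edge bound for skelW
  have hedge1 : ∀ a b : {x // x ∈ S}, (⊤ : SimpleGraph {x // x ∈ S}).Adj a b →
      wdist G w (a : V) (b : V) ≤ ENNReal.ofReal (skelW G w ε ℓ S a b) := by
    intro a b _
    have h1 : wdist G w (a : V) (b : V) ≤ dtilde G w ε (ℓ : ℝ) (a : V) (b : V) :=
      wdist_le_dtilde G w hε hLℓ _ _
    rw [skelW, ENNReal.ofReal_toReal (hfin a b)]
    exact h1
  have hlift1 : ∀ a b : {x // x ∈ S},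
      wdist G w (a : V) (b : V) ≤
        wdist (⊤ : SimpleGraph {x // x ∈ S}) (skelW G w ε ℓ S) a b :=
    wdist_lift G w _ _ _ hedge1
  -- per-edge bound for skelW2
  have hedge2 : ∀ a b : {x // x ∈ S}, (⊤ : SimpleGraph {x // x ∈ S}).Adj a b →
      wdist G w (a : V) (b : V) ≤ ENNReal.ofReal (skelW2 G w ε ℓ S N a b) := by
    intro a b hab
    rw [skelW2]
    split_ifs with hcase
    · have hfin2 : wdist (⊤ : SimpleGraph {x // x ∈ S}) (skelW G w ε ℓ S) a b ≠ ⊤ := by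
        have hle := wdist_le_wlen (⊤ : SimpleGraph {x // x ∈ S}) (skelW G w ε ℓ S)
          (SimpleGraph.Walk.cons hab SimpleGraph.Walk.nil)
        refine ne_top_of_le_ne_top ?_ hle
        simp
      rw [ENNReal.ofReal_toReal hfin2]
      exact hlift1 a b
    · exact hedge1 a b hab
  have hlift2 : ∀ a b : {x // x ∈ S},
      wdist G w (a : V) (b : V) ≤
        wdist (⊤ : SimpleGraph {x // x ∈ S}) (skelW2 G w ε ℓ S N) a b :=
    wdist_lift G w _ _ _ hedge2
  refine le_iInf fun u => ?_
  calc wdist G w (s : V) v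
      ≤ wdist G w (s : V) (u : V) + wdist G w (u : V) v := wdist_triangle G w _ _ _
    _ ≤ dtilde (⊤ : SimpleGraph {x // x ∈ S}) (skelW2 G w ε ℓ S N) ε
          (4 * (S.card : ℝ) / (k : ℝ)) s u + dtilde G w ε (ℓ : ℝ) (u : V) v := by
        refine add_le_add ?_ (wdist_le_dtilde G w hε hLℓ _ _)
        exact (hlift2 s u).trans (wdist_le_dtilde _ _ hε hL4 s u)
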